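/- Let I=[a,b]⊂ℝ be a closed nondegenerate interval and let φ∈Φ_w(I) satisfy (A1). Then there exists β∈(0,1] such that for every f:I→ℝ, V̄^φ_I(f) ≤ 1 implies V^φ_I(βf) ≤ 1. Consequently, the Luxemburg quasi-seminorms defined by V̄^φ_I and by V^φ_I are comparable: there is a constant c≥1 with ‖f‖_{V̄^φ_I} ≤ ‖f‖_{V^φ_I} ≤ c ‖f‖_{V̄^φ_I} for all f. -/

import Mathlib

open MeasureTheory Filter Set
open scoped ENNReal

noncomputable section

/-- A partition of the interval `[a, b]` into finitely many nondegenerate closed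
subintervals with pairwise disjoint interiors, encoded by its endpoints
`a = x 0 < x 1 < ⋯ < x n = b`. -/
structure IntervalPartition (a b : ℝ) where
  n : ℕ
  npos : 0 < n
  x : ℕ → ℝ
  left : x 0 = a
  right : x n = b
  strict : ∀ i < n, x i < x (i + 1)

/-- The mesh `|(I_k)|` of a partition: the maximal length of its subintervals. -/
def IntervalPartition.mesh {a b : ℝ} (P : IntervalPartition a b) : ℝ :=
  (Finset.range P.n).sup' (Finset.nonempty_range_iff.mpr P.npos.ne')
    fun k => P.x (k + 1) - P.x k

/-- `φ⁺_A(t) = sup_{x ∈ A} φ(x, t)`. -/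
def phiSup {α : Type*} (φ : α → ℝ → ℝ≥0∞) (A : Set α) (t : ℝ) : ℝ≥0∞ :=
  ⨆ x ∈ A, φ x t

/-- `φ⁻_A(t) = inf_{x ∈ A} φ(x, t)`. -/
def phiInf {α : Type*} (φ : α → ℝ → ℝ≥0∞) (A : Set α) (t : ℝ) : ℝ≥0∞ :=
  ⨅ x ∈ A, φ x t

/-- `Σ_k φ⁺_{I_k}(|Δ_k f| / |I_k|) · |I_k|` associated to a partition of `[a,b]`. -/
def vSum (φ : ℝ → ℝ → ℝ≥0∞) {a b : ℝ} (f : ℝ → ℝ) (P : IntervalPartition a b) : ℝ≥0∞ :=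
  ∑ k ∈ Finset.range P.n,
    phiSup φ (Icc (P.x k) (P.x (k + 1)))
        (|f (P.x (k + 1)) - f (P.x k)| / (P.x (k + 1) - P.x k)) *
      ENNReal.ofReal (P.x (k + 1) - P.x k)

/-- The same sum with `φ⁻` in place of `φ⁺`. -/
def vSumInf (φ : ℝ → ℝ → ℝ≥0∞) {a b : ℝ} (f : ℝ → ℝ) (P : IntervalPartition a b) : ℝ≥0∞ :=
  ∑ k ∈ Finset.range P.n,
    phiInf φ (Icc (P.x k) (P.x (k + 1)))
        (|f (P.x (k + 1)) - f (P.x k)| / (P.x (k + 1) - P.x k)) *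
      ENNReal.ofReal (P.x (k + 1) - P.x k)

/-- The Riesz φ-variation `V^φ_I(f)`: supremum over all partitions. -/
def rieszVar (φ : ℝ → ℝ → ℝ≥0∞) (a b : ℝ) (f : ℝ → ℝ) : ℝ≥0∞ :=
  ⨆ P : IntervalPartition a b, vSum φ f P

/-- The upper Riesz φ-variation `V̄^φ_I(f) = limsup_{|(I_k)|→0} Σ φ⁺_{I_k}(|Δ_k f|/|I_k|)|I_k|`. -/
def rieszVarUpper (φ : ℝ → ℝ → ℝ≥0∞) (a b : ℝ) (f : ℝ → ℝ) : ℝ≥0∞ :=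
  ⨅ (δ : ℝ) (_ : 0 < δ), ⨆ (P : IntervalPartition a b) (_ : P.mesh < δ), vSum φ f P

/-- The lower Riesz φ-variation `V̲^φ_I(f) = limsup_{|(I_k)|→0} Σ φ⁻_{I_k}(|Δ_k f|/|I_k|)|I_k|`. -/
def rieszVarLower (φ : ℝ → ℝ → ℝ≥0∞) (a b : ℝ) (f : ℝ → ℝ) : ℝ≥0∞ :=
  ⨅ (δ : ℝ) (_ : 0 < δ), ⨆ (P : IntervalPartition a b) (_ : P.mesh < δ), vSumInf φ f P

/-- Riesz φ-variation for `φ` independent of `x`. -/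
def vSumC (φ : ℝ → ℝ≥0∞) {a b : ℝ} (f : ℝ → ℝ) (P : IntervalPartition a b) : ℝ≥0∞ :=
  ∑ k ∈ Finset.range P.n,
    φ (|f (P.x (k + 1)) - f (P.x k)| / (P.x (k + 1) - P.x k)) *
      ENNReal.ofReal (P.x (k + 1) - P.x k)

def rieszVarC (φ : ℝ → ℝ≥0∞) (a b : ℝ) (f : ℝ → ℝ) : ℝ≥0∞ :=
  ⨆ P : IntervalPartition a b, vSumC φ f P

def rieszVarUpperC (φ : ℝ → ℝ≥0∞) (a b : ℝ) (f : ℝ → ℝ) : ℝ≥0∞ :=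
  ⨅ (δ : ℝ) (_ : 0 < δ), ⨆ (P : IntervalPartition a b) (_ : P.mesh < δ), vSumC φ f P

/-- A weak Φ-function on `I` (`φ ∈ Φ_w(I)`). -/
structure IsPhiW {α : Type*} [MeasurableSpace α] (φ : α → ℝ → ℝ≥0∞) (I : Set α) : Prop where
  meas : ∀ f : α → ℝ, Measurable f → Measurable fun x => φ x |f x|
  mono : ∀ x ∈ I, MonotoneOn (φ x) (Ici 0)
  map_zero : ∀ x ∈ I, φ x 0 = 0
  tendsto_zero : ∀ x ∈ I, Tendsto (φ x) (nhdsWithin 0 (Ioi 0)) (nhds 0)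
  tendsto_top : ∀ x ∈ I, Tendsto (φ x) atTop (nhds ⊤)
  aInc1 : ∃ L : ℝ, 1 ≤ L ∧ ∀ x ∈ I, ∀ s t : ℝ, 0 < s → s ≤ t →
    φ x s / ENNReal.ofReal s ≤ ENNReal.ofReal L * (φ x t / ENNReal.ofReal t)

/-- A convex Φ-function on `I` (`φ ∈ Φ_c(I)`): weak, convex and left-continuous in `t`. -/
structure IsPhiCx {α : Type*} [MeasurableSpace α] (φ : α → ℝ → ℝ≥0∞) (I : Set α) : Prop where
  toIsPhiW : IsPhiW φ I
  convex : ∀ x ∈ I, ∀ s t θ : ℝ, 0 ≤ s → 0 ≤ t → 0 ≤ θ → θ ≤ 1 →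
    φ x (θ * s + (1 - θ) * t) ≤ ENNReal.ofReal θ * φ x s + ENNReal.ofReal (1 - θ) * φ x t
  leftCont : ∀ x ∈ I, ∀ t : ℝ, 0 < t → Tendsto (φ x) (nhdsWithin t (Iio t)) (nhds (φ x t))

/-- An `x`-independent convex Φ-function (`φ ∈ Φ_c`). -/
structure IsPhiC (φ : ℝ → ℝ≥0∞) : Prop where
  mono : MonotoneOn φ (Ici 0)
  map_zero : φ 0 = 0
  tendsto_zero : Tendsto φ (nhdsWithin 0 (Ioi 0)) (nhds 0)
  tendsto_top : Tendsto φ atTop (nhds ⊤)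
  convex : ∀ s t θ : ℝ, 0 ≤ s → 0 ≤ t → 0 ≤ θ → θ ≤ 1 →
    φ (θ * s + (1 - θ) * t) ≤ ENNReal.ofReal θ * φ s + ENNReal.ofReal (1 - θ) * φ t
  leftCont : ∀ t : ℝ, 0 < t → Tendsto φ (nhdsWithin t (Iio t)) (nhds (φ t))

/-- `(aInc)_1` with a given constant `L`. -/
def AInc1Const (φ : ℝ → ℝ → ℝ≥0∞) (I : Set ℝ) (L : ℝ) : Prop :=
  1 ≤ L ∧ ∀ x ∈ I, ∀ s t : ℝ, 0 < s → s ≤ t →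
    φ x s / ENNReal.ofReal s ≤ ENNReal.ofReal L * (φ x t / ENNReal.ofReal t)

/-- `(aInc)_p`: `t ↦ φ(x,t)/t^p` is almost increasing, uniformly in `x ∈ I`. -/
def AIncP (φ : ℝ → ℝ → ℝ≥0∞) (I : Set ℝ) (p : ℝ) : Prop :=
  ∃ Lp : ℝ, 1 ≤ Lp ∧ ∀ x ∈ I, ∀ s t : ℝ, 0 < s → s ≤ t →
    φ x s / ENNReal.ofReal (s ^ p) ≤ ENNReal.ofReal Lp * (φ x t / ENNReal.ofReal (t ^ p))

/-- `(aDec)_q`: `t ↦ φ(x,t)/t^q` is almost decreasing, uniformly in `x ∈ I`. -/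
def ADecQ (φ : ℝ → ℝ → ℝ≥0∞) (I : Set ℝ) (q : ℝ) : Prop :=
  ∃ Lq : ℝ, 1 ≤ Lq ∧ ∀ x ∈ I, ∀ s t : ℝ, 0 < s → s ≤ t →
    φ x t / ENNReal.ofReal (t ^ q) ≤ ENNReal.ofReal Lq * (φ x s / ENNReal.ofReal (s ^ q))

/-- `(A0)`. -/
def A0 (φ : ℝ → ℝ → ℝ≥0∞) (I : Set ℝ) : Prop :=
  ∃ β : ℝ, 0 < β ∧ β ≤ 1 ∧ ∀ x ∈ I, φ x β ≤ 1 ∧ 1 ≤ φ x (1 / β)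

/-- `(A1)`; in dimension one a ball of radius `r` has measure `2r`. -/
def A1 (φ : ℝ → ℝ → ℝ≥0∞) (I : Set ℝ) : Prop :=
  ∀ K : ℝ, 0 < K → ∃ β : ℝ, 0 < β ∧ β ≤ 1 ∧
    ∀ z r : ℝ, 0 < r → ∀ x ∈ Metric.ball z r ∩ I, ∀ y ∈ Metric.ball z r ∩ I,
      ∀ t : ℝ, 0 ≤ t → φ y t ≤ ENNReal.ofReal (K / (2 * r)) →
        φ x (β * t) ≤ φ y t + 1

/-- A modulus of continuity: nonnegative with `ω(r) → 0` as `r → 0⁺`. -/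
def IsModulus (ω : ℝ → ℝ) : Prop :=
  (∀ r, 0 ≤ ω r) ∧ Tendsto ω (nhdsWithin 0 (Ioi 0)) (nhds 0)

/-- `(VA1)`; in dimension one a ball of radius `r` has measure `2r`. -/
def VA1 (φ : ℝ → ℝ → ℝ≥0∞) (I : Set ℝ) : Prop :=
  ∀ K : ℝ, 0 < K → ∃ ω : ℝ → ℝ, IsModulus ω ∧
    ∀ z r : ℝ, 0 < r → ∀ x ∈ Metric.ball z r ∩ I, ∀ y ∈ Metric.ball z r ∩ I,
      ∀ t : ℝ, 0 ≤ t → φ y t ≤ ENNReal.ofReal (K / (2 * r)) →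
        φ x (t / (1 + ω r)) ≤ φ y t + ENNReal.ofReal (ω r)

/-- `φ'_∞(x) = lim_{t→∞} φ(x,t)/t`, realized as a supremum since the ratio is nondecreasing
for convex `φ` with `φ(x,0) = 0`. -/
def phiInfty {α : Type*} (φ : α → ℝ → ℝ≥0∞) (x : α) : ℝ≥0∞ :=
  ⨆ (t : ℝ) (_ : 0 < t), φ x t / ENNReal.ofReal t

/-- Membership in `RBV^φ([a,b])`: `V^φ(λ f) → 0` as `λ → 0⁺`. -/
def MemRBV (φ : ℝ → ℝ → ℝ≥0∞) (a b : ℝ) (f : ℝ → ℝ) : Prop :=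
  Tendsto (fun lam : ℝ => rieszVar φ a b fun x => lam * f x) (nhdsWithin 0 (Ioi 0)) (nhds 0)

/-- The Luxemburg quasi-seminorm `‖f‖_{RBV^φ([a,b])}`. -/
def rbvNorm (φ : ℝ → ℝ → ℝ≥0∞) (a b : ℝ) (f : ℝ → ℝ) : ℝ :=
  sInf {lam : ℝ | 0 < lam ∧ rieszVar φ a b (fun x => f x / lam) ≤ 1}

/-- The Luxemburg quasi-seminorm associated to the upper Riesz variation. -/
def rbvNormUpper (φ : ℝ → ℝ → ℝ≥0∞) (a b : ℝ) (f : ℝ → ℝ) : ℝ :=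
  sInf {lam : ℝ | 0 < lam ∧ rieszVarUpper φ a b (fun x => f x / lam) ≤ 1}

/-- Membership in the generalized Orlicz space `L^φ([a,b])`. -/
def MemLphi (φ : ℝ → ℝ → ℝ≥0∞) (a b : ℝ) (g : ℝ → ℝ) : Prop :=
  Measurable g ∧
    Tendsto (fun lam : ℝ => ∫⁻ x in Icc a b, φ x (lam * |g x|))
      (nhdsWithin 0 (Ioi 0)) (nhds 0)

/-- The Luxemburg quasi-norm on `L^φ([a,b])`. -/
def lphiNorm (φ : ℝ → ℝ → ℝ≥0∞) (a b : ℝ) (g : ℝ → ℝ) : ℝ :=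
  sInf {lam : ℝ | 0 < lam ∧ (∫⁻ x in Icc a b, φ x (|g x| / lam)) ≤ 1}

/-- Absolute continuity of `f` on `[a, b]`. -/
def AbsContOn (f : ℝ → ℝ) (a b : ℝ) : Prop :=
  ∀ ε : ℝ, 0 < ε → ∃ δ : ℝ, 0 < δ ∧ ∀ (m : ℕ) (s t : ℕ → ℝ),
    (∀ i < m, a ≤ s i ∧ s i ≤ t i ∧ t i ≤ b) →
    (∀ i j, i < j → j < m → t i ≤ s j ∨ t j ≤ s i) →
    (∑ i ∈ Finset.range m, (t i - s i)) < δ →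
    (∑ i ∈ Finset.range m, |f (t i) - f (s i)|) < ε

/-- Left-continuity of `f` at every point of `(a, b]`. -/
def LeftContOn (f : ℝ → ℝ) (a b : ℝ) : Prop :=
  ∀ x ∈ Ioc a b, Tendsto f (nhdsWithin x (Iio x)) (nhds (f x))

/-- `μ` is the distributional derivative measure of the left-continuous function `f` of
bounded variation on `[a,b]`: `f(x) = f(a) + Df([a, x))`. -/
def IsDerivMeasure (f : ℝ → ℝ) (a b : ℝ) (μ : SignedMeasure ℝ) : Prop :=
  ∀ x ∈ Icc a b, f x = f a + μ (Ico a x)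

end

section Aux

open Finset in
private lemma sum_range_mul_blocks {M : Type*} [AddCommMonoid M] (g : ℕ → M) (n m : ℕ) :
    ∑ i ∈ Finset.range (n * m), g i
      = ∑ k ∈ Finset.range n, ∑ j ∈ Finset.range m, g (k * m + j) := by
  induction n with
  | zero => simp
  | succ n ih =>
    rw [Finset.sum_range_succ, ← ih, Nat.succ_mul, Finset.sum_range_add]

private lemma divmod_key {m q r : ℕ} (hm : 0 < m) (hr : r < m) :
    (q * m + r) / m = q ∧ (q * m + r) % m = r := by
  constructor
  · rw [Nat.mul_comm, Nat.mul_add_div hm, Nat.div_eq_of_lt hr, Nat.add_zero]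
  · rw [Nat.mul_comm, Nat.mul_add_mod, Nat.mod_eq_of_lt hr]

namespace IntervalPartition

variable {a b : ℝ} (P : IntervalPartition a b)

lemma x_lt {i j : ℕ} (hij : i < j) (hj : j ≤ P.n) : P.x i < P.x j := by
  induction j with
  | zero => omega
  | succ j ih =>
    rcases Nat.lt_succ_iff_lt_or_eq.mp hij with h | h
    · exact (ih h (by omega)).trans (P.strict j (by omega))
    · subst h; exact P.strict i (by omega)

lemma x_le {i j : ℕ} (hij : i ≤ j) (hj : j ≤ P.n) : P.x i ≤ P.x j := by
  rcases eq_or_lt_of_le hij with h | h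
  · exact h ▸ le_rfl
  · exact (P.x_lt h hj).le

lemma x_mem {i : ℕ} (hi : i ≤ P.n) : P.x i ∈ Set.Icc a b := by
  constructor
  · have := P.x_le (Nat.zero_le i) hi; rw [P.left] at this; exact this
  · have := P.x_le hi le_rfl; rw [P.right] at this; exact this

lemma sub_le {k : ℕ} (hk : k < P.n) : P.x (k + 1) - P.x k ≤ b - a := by
  have h1 := (P.x_mem (by omega : k ≤ P.n)).1
  have h2 := (P.x_mem (by omega : k + 1 ≤ P.n)).2
  linarith

lemma sub_pos' {k : ℕ} (hk : k < P.n) : 0 < P.x (k + 1) - P.x k :=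
  sub_pos.mpr (P.strict k hk)

lemma Icc_subset {k : ℕ} (hk : k < P.n) :
    Set.Icc (P.x k) (P.x (k + 1)) ⊆ Set.Icc a b :=
  Set.Icc_subset_Icc (P.x_mem (by omega : k ≤ P.n)).1 (P.x_mem (by omega : k + 1 ≤ P.n)).2

/-- Points of the refined partition. -/
noncomputable def rx (m : ℕ) : ℕ → ℝ := fun i =>
  P.x (i / m) + ((i % m : ℕ) : ℝ) * ((P.x (i / m + 1) - P.x (i / m)) / m)

lemma rx_eq {m : ℕ} (hm : 0 < m) {q j : ℕ} (hq : q < P.n) (hj : j ≤ m) :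
    P.rx m (q * m + j) = P.x q + (j : ℝ) * ((P.x (q + 1) - P.x q) / m) := by
  rcases eq_or_lt_of_le hj with h | h
  · rw [h]
    have e : q * m + m = (q + 1) * m + 0 := by ring
    rw [e]
    have h1 := divmod_key (q := q + 1) (r := 0) hm hm
    simp only [rx, h1.1, h1.2]
    have hm' : (m : ℝ) ≠ 0 := Nat.cast_ne_zero.mpr hm.ne'
    push_cast
    field_simp
    ring
  · have h1 := divmod_key (q := q) (r := j) hm h
    simp only [rx, h1.1, h1.2]

lemma rx_succ_sub {m : ℕ} (hm : 0 < m) {q j : ℕ} (hq : q < P.n) (hj : j < m) :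
    P.rx m (q * m + j + 1) - P.rx m (q * m + j) = (P.x (q + 1) - P.x q) / m := by
  have e1 : q * m + j + 1 = q * m + (j + 1) := by ring
  rw [e1, P.rx_eq hm hq hj, P.rx_eq hm hq (by omega)]
  push_cast
  ring

/-- Refinement of a partition: subdivide each interval into `m` equal parts. -/
noncomputable def refine (m : ℕ) (hm : 0 < m) : IntervalPartition a b where
  n := P.n * m
  npos := Nat.mul_pos P.npos hm
  x := P.rx m
  left := by
    have := P.rx_eq hm P.npos (Nat.zero_le m)
    simpa [P.left] using this
  right := by
    obtain ⟨n', hn'⟩ : ∃ n', P.n = n' + 1 := ⟨P.n - 1, (Nat.succ_pred_eq_of_pos P.npos).symm⟩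
    have hq : n' < P.n := by omega
    have hmul : P.n * m = n' * m + m := by rw [hn']; ring
    rw [hmul, P.rx_eq hm hq le_rfl]
    have h2 : P.x (n' + 1) = b := by rw [← hn', P.right]
    rw [h2]
    have hm' : (m : ℝ) ≠ 0 := Nat.cast_ne_zero.mpr hm.ne'
    field_simp
    ring
  strict := by
    intro i hi
    obtain ⟨q, j, hq, hj, rfl⟩ : ∃ q j, q < P.n ∧ j < m ∧ i = q * m + j := by
      refine ⟨i / m, i % m, ?_, Nat.mod_lt i hm, ?_⟩
      · exact Nat.div_lt_of_lt_mul (by rw [Nat.mul_comm]; exact hi)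
      · rw [Nat.mul_comm, Nat.div_add_mod]
    have := P.rx_succ_sub hm hq hj
    have hpos : 0 < (P.x (q + 1) - P.x q) / m :=
      div_pos (P.sub_pos' hq) (by exact_mod_cast hm)
    linarith

lemma refine_x_eq {m : ℕ} (hm : 0 < m) {q j : ℕ} (hq : q < P.n) (hj : j ≤ m) :
    (P.refine m hm).x (q * m + j) = P.x q + (j : ℝ) * ((P.x (q + 1) - P.x q) / m) :=
  P.rx_eq hm hq hj

lemma refine_sub {m : ℕ} (hm : 0 < m) {q j : ℕ} (hq : q < P.n) (hj : j < m) :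
    (P.refine m hm).x (q * m + j + 1) - (P.refine m hm).x (q * m + j)
      = (P.x (q + 1) - P.x q) / m :=
  P.rx_succ_sub hm hq hj

lemma refine_Icc_subset {m : ℕ} (hm : 0 < m) {q j : ℕ} (hq : q < P.n) (hj : j < m) :
    Set.Icc ((P.refine m hm).x (q * m + j)) ((P.refine m hm).x (q * m + j + 1))
      ⊆ Set.Icc (P.x q) (P.x (q + 1)) := by
  have e1 : q * m + j + 1 = q * m + (j + 1) := by ring
  rw [e1, P.refine_x_eq hm hq hj.le, P.refine_x_eq hm hq (by omega)]
  have hΔ : 0 < P.x (q + 1) - P.x q := P.sub_pos' hq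
  have hm' : (0:ℝ) < m := by exact_mod_cast hm
  apply Set.Icc_subset_Icc
  · have : 0 ≤ (j : ℝ) * ((P.x (q + 1) - P.x q) / m) := by positivity
    linarith
  · have hj1 : ((j:ℝ) + 1) ≤ m := by exact_mod_cast hj
    have := mul_le_mul_of_nonneg_right hj1 (le_of_lt (div_pos hΔ hm'))
    push_cast
    calc P.x q + ((j:ℝ) + 1) * ((P.x (q + 1) - P.x q) / m)
        ≤ P.x q + (m:ℝ) * ((P.x (q + 1) - P.x q) / m) := by linarith
      _ = P.x (q + 1) := by field_simp; ring

lemma refine_mesh_le {m : ℕ} (hm : 0 < m) : (P.refine m hm).mesh ≤ (b - a) / m := by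
  apply Finset.sup'_le
  intro i hi
  rw [Finset.mem_range] at hi
  obtain ⟨q, j, hq, hj, rfl⟩ : ∃ q j, q < P.n ∧ j < m ∧ i = q * m + j := by
    refine ⟨i / m, i % m, ?_, Nat.mod_lt i hm, ?_⟩
    · exact Nat.div_lt_of_lt_mul (by rw [Nat.mul_comm]; exact hi)
    · rw [Nat.mul_comm, Nat.div_add_mod]
  rw [show (P.refine m hm).x (q * m + j + 1) - (P.refine m hm).x (q * m + j)
      = (P.x (q + 1) - P.x q) / m from P.refine_sub hm hq hj]
  have hm' : (0:ℝ) < m := by exact_mod_cast hm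
  exact div_le_div_of_nonneg_right (P.sub_le hq) hm'.le

end IntervalPartition
end Aux
section Aux2

open ENNReal

private lemma phiSup_le' {φ : ℝ → ℝ → ℝ≥0∞} {A : Set ℝ} {t : ℝ} {c : ℝ≥0∞}
    (h : ∀ x ∈ A, φ x t ≤ c) : phiSup φ A t ≤ c := by
  exact iSup₂_le h

private lemma le_phiSup' {φ : ℝ → ℝ → ℝ≥0∞} {A : Set ℝ} {x : ℝ} (hx : x ∈ A) (t : ℝ) :
    φ x t ≤ phiSup φ A t := le_iSup₂ (f := fun y (_ : y ∈ A) => φ y t) x hx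

private lemma aInc_cross {φ : ℝ → ℝ → ℝ≥0∞} {L : ℝ} {x s t : ℝ}
    (h : φ x s / ENNReal.ofReal s ≤ ENNReal.ofReal L * (φ x t / ENNReal.ofReal t))
    (hs : 0 < s) (ht : 0 < t) :
    φ x s * ENNReal.ofReal t ≤ ENNReal.ofReal L * φ x t * ENNReal.ofReal s := by
  have hu0 : ENNReal.ofReal s ≠ 0 := (ENNReal.ofReal_pos.mpr hs).ne'
  have hut : ENNReal.ofReal s ≠ ⊤ := ENNReal.ofReal_ne_top
  have hv0 : ENNReal.ofReal t ≠ 0 := (ENNReal.ofReal_pos.mpr ht).ne'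
  have hvt : ENNReal.ofReal t ≠ ⊤ := ENNReal.ofReal_ne_top
  have h2 := mul_le_mul_left h (ENNReal.ofReal s * ENNReal.ofReal t)
  calc φ x s * ENNReal.ofReal t
      = φ x s / ENNReal.ofReal s * (ENNReal.ofReal s * ENNReal.ofReal t) := by
        rw [← mul_assoc, ENNReal.div_mul_cancel hu0 hut]
    _ ≤ ENNReal.ofReal L * (φ x t / ENNReal.ofReal t) * (ENNReal.ofReal s * ENNReal.ofReal t) :=
        h2
    _ = ENNReal.ofReal L * (φ x t / ENNReal.ofReal t * ENNReal.ofReal t) * ENNReal.ofReal s := by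
        ring
    _ = ENNReal.ofReal L * φ x t * ENNReal.ofReal s := by
        rw [ENNReal.div_mul_cancel hv0 hvt]

private lemma rieszVarUpper_le_rieszVar (φ : ℝ → ℝ → ℝ≥0∞) (a b : ℝ) (f : ℝ → ℝ) :
    rieszVarUpper φ a b f ≤ rieszVar φ a b f := by
  refine le_trans (iInf_le _ 1) ?_
  refine le_trans (iInf_le _ one_pos) ?_
  exact iSup₂_le fun P _ => le_iSup _ P

namespace IntervalPartition
variable {a b : ℝ} (P : IntervalPartition a b)

lemma refine_x_left {m : ℕ} (hm : 0 < m) {k : ℕ} (hk : k < P.n) :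
    (P.refine m hm).x (k * m) = P.x k := by
  have := P.refine_x_eq hm hk (Nat.zero_le m)
  simpa using this

lemma refine_x_right {m : ℕ} (hm : 0 < m) {k : ℕ} (hk : k < P.n) :
    (P.refine m hm).x (k * m + m) = P.x (k + 1) := by
  rw [P.refine_x_eq hm hk le_rfl]
  have hm' : (m : ℝ) ≠ 0 := Nat.cast_ne_zero.mpr hm.ne'
  field_simp
  ring

lemma refine_telescope {m : ℕ} (hm : 0 < m) {k : ℕ} (hk : k < P.n) (f : ℝ → ℝ) :
    ∑ j ∈ Finset.range m,
        (f ((P.refine m hm).x (k * m + j + 1)) - f ((P.refine m hm).x (k * m + j)))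
      = f (P.x (k + 1)) - f (P.x k) := by
  have := Finset.sum_range_sub (fun j => f ((P.refine m hm).x (k * m + j))) m
  simpa [P.refine_x_left hm hk, P.refine_x_right hm hk, add_assoc] using this

end IntervalPartition
end Aux2
section AuxKey

private lemma key_bound (a b : ℝ) (hab : a < b) (φ : ℝ → ℝ → ℝ≥0∞)
    (hφmz : ∀ x ∈ Set.Icc a b, φ x 0 = 0)
    {L : ℝ} (hL1 : 1 ≤ L)
    (haInc : ∀ x ∈ Set.Icc a b, ∀ s t : ℝ, 0 < s → s ≤ t →
      φ x s / ENNReal.ofReal s ≤ ENNReal.ofReal L * (φ x t / ENNReal.ofReal t))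
    {β₀ : ℝ} (hβ₀pos : 0 < β₀)
    (hA1' : ∀ z r : ℝ, 0 < r → ∀ x ∈ Metric.ball z r ∩ Set.Icc a b,
      ∀ y ∈ Metric.ball z r ∩ Set.Icc a b, ∀ t : ℝ, 0 ≤ t →
        φ y t ≤ ENNReal.ofReal (12 * L / (2 * r)) → φ x (β₀ * t) ≤ φ y t + 1)
    (f : ℝ → ℝ) {δ : ℝ} (hδ : 0 < δ)
    (hδbound : ∀ P : IntervalPartition a b, P.mesh < δ → vSum φ f P ≤ 2)
    (P : IntervalPartition a b) :
    vSum φ (fun x => β₀ / 2 * f x) P ≤ ENNReal.ofReal (6 * L + (b - a)) := by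
  have hL0 : 0 < L := lt_of_lt_of_le one_pos hL1
  have hba : 0 < b - a := by linarith
  obtain ⟨m, hmgt⟩ := exists_nat_gt ((b - a) / δ)
  have hm0 : 0 < m := by
    have h1 : (0:ℝ) < (b - a) / δ := by positivity
    have : (0:ℝ) < m := lt_trans h1 hmgt
    exact_mod_cast this
  have hmR : 0 < (m:ℝ) := by exact_mod_cast hm0
  set Q := P.refine m hm0 with hQdef
  have hQmesh : Q.mesh < δ := by
    refine lt_of_le_of_lt (P.refine_mesh_le hm0) ?_
    rw [div_lt_iff₀ hmR]
    have h1 := (div_lt_iff₀ hδ).mp hmgt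
    nlinarith
  have hQ2 : vSum φ f Q ≤ 2 := hδbound Q hQmesh
  set termQ : ℕ → ℝ≥0∞ := fun i =>
    phiSup φ (Set.Icc (Q.x i) (Q.x (i + 1)))
        (|f (Q.x (i + 1)) - f (Q.x i)| / (Q.x (i + 1) - Q.x i)) *
      ENNReal.ofReal (Q.x (i + 1) - Q.x i) with htermQ
  have hQsum : vSum φ f Q = ∑ k ∈ Finset.range P.n, ∑ j ∈ Finset.range m, termQ (k * m + j) :=
    sum_range_mul_blocks termQ P.n m
  rw [vSum]
  have hperk : ∀ k ∈ Finset.range P.n,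
      phiSup φ (Set.Icc (P.x k) (P.x (k + 1)))
          (|(fun x => β₀ / 2 * f x) (P.x (k + 1)) - (fun x => β₀ / 2 * f x) (P.x k)| /
            (P.x (k + 1) - P.x k)) *
        ENNReal.ofReal (P.x (k + 1) - P.x k)
      ≤ ENNReal.ofReal (2 * L) *
          ((∑ j ∈ Finset.range m, termQ (k * m + j)) +
            ENNReal.ofReal ((P.x (k + 1) - P.x k) / (b - a)))
        + ENNReal.ofReal (P.x (k + 1) - P.x k) := by
    intro k hk
    rw [Finset.mem_range] at hk
    simp only
    set Δ : ℝ := P.x (k + 1) - P.x k with hΔdef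
    have hΔ : 0 < Δ := P.sub_pos' hk
    set Vk : ℝ≥0∞ := ∑ j ∈ Finset.range m, termQ (k * m + j) with hVkdef
    have hVk2 : Vk ≤ 2 := by
      refine le_trans ?_ hQ2
      rw [hQsum]
      exact Finset.single_le_sum (f := fun k => ∑ j ∈ Finset.range m, termQ (k * m + j))
        (fun i _ => zero_le) (Finset.mem_range.mpr hk)
    have habs : |β₀ / 2 * f (P.x (k + 1)) - β₀ / 2 * f (P.x k)|
        = β₀ / 2 * |f (P.x (k + 1)) - f (P.x k)| := by
      rw [← mul_sub, abs_mul, abs_of_pos (by positivity)]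
    rw [habs]
    set sk : ℝ := |f (P.x (k + 1)) - f (P.x k)| with hskdef
    have hsk0 : 0 ≤ sk := abs_nonneg _
    rcases eq_or_lt_of_le hsk0 with hsk | hsk
    · have hz : β₀ / 2 * sk / Δ = 0 := by rw [← hsk, mul_zero, zero_div]
      rw [hz]
      have hzero : phiSup φ (Set.Icc (P.x k) (P.x (k + 1))) 0 = 0 := by
        refine le_antisymm (phiSup_le' fun u hu => ?_) (zero_le)
        rw [hφmz u (P.Icc_subset hk hu)]
      rw [hzero, zero_mul]
      exact zero_le
    · set s : ℝ := sk / Δ with hsdef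
      have hs : 0 < s := div_pos hsk hΔ
      set ℓ : ℝ := Δ / m with hℓdef
      have hℓ : 0 < ℓ := div_pos hΔ hmR
      have hlen : ∀ j < m, Q.x (k * m + j + 1) - Q.x (k * m + j) = ℓ :=
        fun j hj => P.refine_sub hm0 hk hj
      set sj : ℕ → ℝ := fun j => |f (Q.x (k * m + j + 1)) - f (Q.x (k * m + j))| / ℓ with hsjdef
      have hsj0 : ∀ j, 0 ≤ sj j := fun j => div_nonneg (abs_nonneg _) hℓ.le
      have hterm_eq : ∀ j < m, termQ (k * m + j)
          = phiSup φ (Set.Icc (Q.x (k * m + j)) (Q.x (k * m + j + 1))) (sj j)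
              * ENNReal.ofReal ℓ := by
        intro j hj
        rw [htermQ]
        simp only
        rw [hlen j hj]
      have hidx : ∀ j < m, k * m + j < Q.n := by
        intro j hj
        have h1 : k * m + j < (k + 1) * m := by
          have := Nat.add_lt_add_left hj (k * m)
          calc k * m + j < k * m + m := this
            _ = (k + 1) * m := (Nat.succ_mul k m).symm
        have h2 : (k + 1) * m ≤ P.n * m := Nat.mul_le_mul_right m hk
        exact lt_of_lt_of_le h1 h2
      have htel : sk ≤ ∑ j ∈ Finset.range m, sj j * ℓ := by
        have h1 : ∀ j ∈ Finset.range m, sj j * ℓ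
            = |f (Q.x (k * m + j + 1)) - f (Q.x (k * m + j))| := by
          intro j hj
          rw [hsjdef]
          field_simp
        rw [Finset.sum_congr rfl h1]
        calc sk = |∑ j ∈ Finset.range m, (f (Q.x (k * m + j + 1)) - f (Q.x (k * m + j)))| := by
              rw [P.refine_telescope hm0 hk f]
          _ ≤ ∑ j ∈ Finset.range m, |f (Q.x (k * m + j + 1)) - f (Q.x (k * m + j))| :=
              Finset.abs_sum_le_sum_abs _ _
      set A : Finset ℕ := (Finset.range m).filter (fun j => s / 2 ≤ sj j) with hA
      have hAsum : sk / 2 ≤ ∑ j ∈ A, sj j * ℓ := by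
        have hsplit := Finset.sum_filter_add_sum_filter_not (Finset.range m)
          (fun j => s / 2 ≤ sj j) (fun j => sj j * ℓ)
        rw [← hA] at hsplit
        have hnotA : ∑ j ∈ (Finset.range m).filter (fun j => ¬ s / 2 ≤ sj j), sj j * ℓ
            ≤ sk / 2 := by
          have hstep1 : ∀ j ∈ (Finset.range m).filter (fun j => ¬ s / 2 ≤ sj j),
              sj j * ℓ ≤ s / 2 * ℓ := by
            intro j hj
            have hj2 := (Finset.mem_filter.mp hj).2
            push_neg at hj2
            exact mul_le_mul_of_nonneg_right hj2.le hℓ.le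
          calc ∑ j ∈ (Finset.range m).filter (fun j => ¬ s / 2 ≤ sj j), sj j * ℓ
              ≤ ∑ _j ∈ (Finset.range m).filter (fun j => ¬ s / 2 ≤ sj j), s / 2 * ℓ :=
                Finset.sum_le_sum hstep1
            _ ≤ ∑ _j ∈ Finset.range m, s / 2 * ℓ :=
                Finset.sum_le_sum_of_subset_of_nonneg (Finset.filter_subset _ _)
                  (fun _ _ _ => by positivity)
            _ = m * (s / 2 * ℓ) := by
                rw [Finset.sum_const, Finset.card_range, nsmul_eq_mul]
            _ = sk / 2 := by
                rw [hsdef, hℓdef]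
                field_simp
        linarith
      set η : ℝ≥0∞ := ENNReal.ofReal (Δ / (b - a)) with hη
      set τ : ℝ≥0∞ := ENNReal.ofReal (2 * L) * (Vk + η) / ENNReal.ofReal Δ with hτ
      have hΔ0' : ENNReal.ofReal Δ ≠ 0 := (ENNReal.ofReal_pos.mpr hΔ).ne'
      have hΔt' : ENNReal.ofReal Δ ≠ ⊤ := ENNReal.ofReal_ne_top
      have hτΔ : τ * ENNReal.ofReal Δ = ENNReal.ofReal (2 * L) * (Vk + η) :=
        ENNReal.div_mul_cancel hΔ0' hΔt'
      have hexist : ∃ j ∈ A, ∃ y ∈ Set.Icc (Q.x (k * m + j)) (Q.x (k * m + j + 1)),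
          φ y (s / 2) ≤ τ := by
        by_contra hcon
        push_neg at hcon
        have hstep : ∀ j ∈ A, τ * ENNReal.ofReal (sj j * ℓ)
            ≤ ENNReal.ofReal L * ENNReal.ofReal (s / 2) * termQ (k * m + j) := by
          intro j hj
          have hjm : j < m := Finset.mem_range.mp (Finset.mem_filter.mp hj).1
          have hsjA : s / 2 ≤ sj j := (Finset.mem_filter.mp hj).2
          have hyQ : Q.x (k * m + j) ∈ Set.Icc (Q.x (k * m + j)) (Q.x (k * m + j + 1)) :=
            ⟨le_rfl, (Q.strict (k * m + j) (hidx j hjm)).le⟩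
          have hyab : Q.x (k * m + j) ∈ Set.Icc a b := Q.x_mem (hidx j hjm).le
          have hτlt := hcon j hj (Q.x (k * m + j)) hyQ
          have hcross := aInc_cross (haInc _ hyab (s / 2) (sj j) (by positivity) hsjA)
            (by positivity) (lt_of_lt_of_le (by positivity) hsjA)
          calc τ * ENNReal.ofReal (sj j * ℓ)
              = τ * ENNReal.ofReal (sj j) * ENNReal.ofReal ℓ := by
                rw [ENNReal.ofReal_mul (hsj0 j), mul_assoc]
            _ ≤ φ (Q.x (k * m + j)) (s / 2) * ENNReal.ofReal (sj j) * ENNReal.ofReal ℓ := by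
                exact mul_le_mul_left (mul_le_mul_left hτlt.le _) _
            _ ≤ ENNReal.ofReal L * φ (Q.x (k * m + j)) (sj j) * ENNReal.ofReal (s / 2)
                  * ENNReal.ofReal ℓ :=
                mul_le_mul_left hcross _
            _ = ENNReal.ofReal L * ENNReal.ofReal (s / 2)
                  * (φ (Q.x (k * m + j)) (sj j) * ENNReal.ofReal ℓ) := by ring
            _ ≤ ENNReal.ofReal L * ENNReal.ofReal (s / 2) * termQ (k * m + j) := by
                rw [hterm_eq j hjm]
                exact mul_le_mul_right (mul_le_mul_left (le_phiSup' hyQ _) _) _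
        have hsum1 : τ * ENNReal.ofReal (sk / 2)
            ≤ ENNReal.ofReal L * ENNReal.ofReal (s / 2) * Vk := by
          calc τ * ENNReal.ofReal (sk / 2)
              ≤ τ * ENNReal.ofReal (∑ j ∈ A, sj j * ℓ) :=
                mul_le_mul_right (ENNReal.ofReal_le_ofReal hAsum) τ
            _ = ∑ j ∈ A, τ * ENNReal.ofReal (sj j * ℓ) := by
                rw [ENNReal.ofReal_sum_of_nonneg (fun j _ => mul_nonneg (hsj0 j) hℓ.le),
                  Finset.mul_sum]
            _ ≤ ∑ j ∈ A, ENNReal.ofReal L * ENNReal.ofReal (s / 2) * termQ (k * m + j) :=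
                Finset.sum_le_sum hstep
            _ = ENNReal.ofReal L * ENNReal.ofReal (s / 2) * ∑ j ∈ A, termQ (k * m + j) := by
                rw [Finset.mul_sum]
            _ ≤ ENNReal.ofReal L * ENNReal.ofReal (s / 2) * Vk := by
                refine mul_le_mul_right ?_ _
                rw [hVkdef, hA]
                exact Finset.sum_le_sum_of_subset_of_nonneg (Finset.filter_subset _ _)
                  (fun _ _ _ => zero_le)
        have hsk2 : ENNReal.ofReal (sk / 2) = ENNReal.ofReal (s / 2) * ENNReal.ofReal Δ := by
          rw [← ENNReal.ofReal_mul (by positivity)]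
          congr 1
          rw [hsdef]
          field_simp
        have hs20 : ENNReal.ofReal (s / 2) ≠ 0 := (ENNReal.ofReal_pos.mpr (by positivity)).ne'
        have hs2t : ENNReal.ofReal (s / 2) ≠ ⊤ := ENNReal.ofReal_ne_top
        have hcanc : τ * ENNReal.ofReal Δ ≤ ENNReal.ofReal L * Vk := by
          have h' : τ * ENNReal.ofReal Δ * ENNReal.ofReal (s / 2)
              ≤ ENNReal.ofReal L * Vk * ENNReal.ofReal (s / 2) := by
            calc τ * ENNReal.ofReal Δ * ENNReal.ofReal (s / 2)
                = τ * (ENNReal.ofReal (s / 2) * ENNReal.ofReal Δ) := by ring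
              _ = τ * ENNReal.ofReal (sk / 2) := by rw [← hsk2]
              _ ≤ ENNReal.ofReal L * ENNReal.ofReal (s / 2) * Vk := hsum1
              _ = ENNReal.ofReal L * Vk * ENNReal.ofReal (s / 2) := by ring
          exact (ENNReal.mul_le_mul_iff_left hs20 hs2t).mp h'
        rw [hτΔ] at hcanc
        have h2L : ENNReal.ofReal (2 * L) = 2 * ENNReal.ofReal L := by
          rw [show (2:ℝ) * L = L * 2 by ring, ENNReal.ofReal_mul hL0.le]
          rw [mul_comm]
          norm_num
        rw [h2L] at hcanc
        have hL0' : ENNReal.ofReal L ≠ 0 := (ENNReal.ofReal_pos.mpr hL0).ne'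
        have hLt' : ENNReal.ofReal L ≠ ⊤ := ENNReal.ofReal_ne_top
        have hfin : 2 * (Vk + η) ≤ Vk := by
          have h' : ENNReal.ofReal L * (2 * (Vk + η)) ≤ ENNReal.ofReal L * Vk := by
            calc ENNReal.ofReal L * (2 * (Vk + η)) = 2 * ENNReal.ofReal L * (Vk + η) := by ring
              _ ≤ ENNReal.ofReal L * Vk := hcanc
          exact (ENNReal.mul_le_mul_iff_right hL0' hLt').mp h'
        have hVkfin : Vk ≠ ⊤ := (lt_of_le_of_lt hVk2 (by norm_num)).ne
        have hcontr : Vk + 2 * η ≤ 0 := by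
          have h1 : Vk + (Vk + 2 * η) ≤ Vk + 0 := by
            rw [add_zero]
            calc Vk + (Vk + 2 * η) = 2 * (Vk + η) := by ring
              _ ≤ Vk := hfin
          exact (ENNReal.add_le_add_iff_left hVkfin).mp h1
        have hη0 : η ≠ 0 := by
          rw [hη]
          exact (ENNReal.ofReal_pos.mpr (by positivity)).ne'
        rw [nonpos_iff_eq_zero, add_eq_zero] at hcontr
        have h2η := hcontr.2
        rw [mul_eq_zero] at h2η
        rcases h2η with h | h
        · norm_num at h
        · exact hη0 h
      obtain ⟨j, hjA, y, hy, hφy⟩ := hexist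
      have hjm : j < m := Finset.mem_range.mp (Finset.mem_filter.mp hjA).1
      have hyIk : y ∈ Set.Icc (P.x k) (P.x (k + 1)) := P.refine_Icc_subset hm0 hk hjm hy
      have hτK : τ ≤ ENNReal.ofReal (12 * L / (2 * Δ)) := by
        have hη1 : η ≤ 1 := by
          rw [hη, ← ENNReal.ofReal_one]
          exact ENNReal.ofReal_le_ofReal (by rw [div_le_one hba]; exact P.sub_le hk)
        have h3 : Vk + η ≤ 3 := by
          calc Vk + η ≤ 2 + 1 := add_le_add hVk2 hη1
            _ = 3 := by norm_num
        rw [hτ]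
        calc ENNReal.ofReal (2 * L) * (Vk + η) / ENNReal.ofReal Δ
            ≤ ENNReal.ofReal (2 * L) * 3 / ENNReal.ofReal Δ := by gcongr
          _ = ENNReal.ofReal (6 * L) / ENNReal.ofReal Δ := by
              have h36 : ENNReal.ofReal (2 * L) * 3 = ENNReal.ofReal (6 * L) := by
                rw [show (3:ℝ≥0∞) = ENNReal.ofReal 3 by norm_num,
                  ← ENNReal.ofReal_mul (by positivity)]
                congr 1
                ring
              rw [h36]
          _ = ENNReal.ofReal (6 * L / Δ) := (ENNReal.ofReal_div_of_pos hΔ).symm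
          _ = ENNReal.ofReal (12 * L / (2 * Δ)) := by
              congr 1
              field_simp
              ring
      have hball : ∀ u ∈ Set.Icc (P.x k) (P.x (k + 1)),
          u ∈ Metric.ball ((P.x k + P.x (k + 1)) / 2) Δ ∩ Set.Icc a b := by
        intro u hu
        refine ⟨?_, P.Icc_subset hk hu⟩
        rw [Metric.mem_ball, Real.dist_eq, abs_lt]
        obtain ⟨h1, h2⟩ := hu
        constructor
        · have : P.x (k + 1) - P.x k = Δ := rfl
          nlinarith [hΔ]
        · nlinarith [hΔ]
      have hsc2 : ∀ u ∈ Set.Icc (P.x k) (P.x (k + 1)), φ u (β₀ * (s / 2)) ≤ τ + 1 := by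
        intro u hu
        have h := hA1' ((P.x k + P.x (k + 1)) / 2) Δ hΔ u (hball u hu) y (hball y hyIk)
          (s / 2) (by positivity) (le_trans hφy hτK)
        exact le_trans h (add_le_add_left hφy 1)
      have harg : β₀ / 2 * sk / Δ = β₀ * (s / 2) := by rw [hsdef]; ring
      rw [harg]
      calc phiSup φ (Set.Icc (P.x k) (P.x (k + 1))) (β₀ * (s / 2)) * ENNReal.ofReal Δ
          ≤ (τ + 1) * ENNReal.ofReal Δ := mul_le_mul_left (phiSup_le' hsc2) _
        _ = τ * ENNReal.ofReal Δ + ENNReal.ofReal Δ := by rw [add_mul, one_mul]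
        _ = ENNReal.ofReal (2 * L) * (Vk + η) + ENNReal.ofReal Δ := by rw [hτΔ]
  refine le_trans (Finset.sum_le_sum hperk) ?_
  have hSS : ∑ k ∈ Finset.range P.n, ∑ j ∈ Finset.range m, termQ (k * m + j) ≤ 2 := by
    rw [← hQsum]; exact hQ2
  have e2 : ∑ k ∈ Finset.range P.n, ENNReal.ofReal ((P.x (k + 1) - P.x k) / (b - a))
      = 1 := by
    rw [← ENNReal.ofReal_sum_of_nonneg (fun k hk =>
      div_nonneg (P.sub_pos' (Finset.mem_range.mp hk)).le hba.le)]
    have hsum : ∑ k ∈ Finset.range P.n, (P.x (k + 1) - P.x k) / (b - a) = 1 := by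
      rw [← Finset.sum_div, Finset.sum_range_sub P.x, P.right, P.left]
      field_simp
    rw [hsum, ENNReal.ofReal_one]
  have e3 : ∑ k ∈ Finset.range P.n, ENNReal.ofReal (P.x (k + 1) - P.x k)
      = ENNReal.ofReal (b - a) := by
    rw [← ENNReal.ofReal_sum_of_nonneg (fun k hk =>
      (P.sub_pos' (Finset.mem_range.mp hk)).le)]
    rw [Finset.sum_range_sub P.x, P.right, P.left]
  calc ∑ k ∈ Finset.range P.n,
        (ENNReal.ofReal (2 * L) *
          ((∑ j ∈ Finset.range m, termQ (k * m + j)) +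
            ENNReal.ofReal ((P.x (k + 1) - P.x k) / (b - a)))
          + ENNReal.ofReal (P.x (k + 1) - P.x k))
      = ENNReal.ofReal (2 * L) *
          ((∑ k ∈ Finset.range P.n, ∑ j ∈ Finset.range m, termQ (k * m + j)) +
            ∑ k ∈ Finset.range P.n, ENNReal.ofReal ((P.x (k + 1) - P.x k) / (b - a)))
        + ∑ k ∈ Finset.range P.n, ENNReal.ofReal (P.x (k + 1) - P.x k) := by
        rw [Finset.sum_add_distrib, ← Finset.mul_sum, Finset.sum_add_distrib]
    _ ≤ ENNReal.ofReal (2 * L) * (2 + 1) + ENNReal.ofReal (b - a) := by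
        rw [e2, e3]
        exact add_le_add (mul_le_mul_right (add_le_add_left hSS 1) _) le_rfl
    _ = ENNReal.ofReal (6 * L + (b - a)) := by
        rw [show (2:ℝ≥0∞) + 1 = 3 by norm_num]
        rw [show ENNReal.ofReal (2 * L) * 3 = ENNReal.ofReal (6 * L) by
          rw [show (3:ℝ≥0∞) = ENNReal.ofReal 3 by norm_num,
            ← ENNReal.ofReal_mul (by positivity)]
          congr 1
          ring]
        rw [← ENNReal.ofReal_add (by positivity) hba.le]

end AuxKey
section Aux3

private lemma scale_bound {φ : ℝ → ℝ → ℝ≥0∞} {I : Set ℝ} {L : ℝ}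
    (haInc : ∀ x ∈ I, ∀ s t : ℝ, 0 < s → s ≤ t →
      φ x s / ENNReal.ofReal s ≤ ENNReal.ofReal L * (φ x t / ENNReal.ofReal t))
    (hmz : ∀ x ∈ I, φ x 0 = 0) {x : ℝ} (hx : x ∈ I) {θ t : ℝ}
    (hθ0 : 0 < θ) (hθ1 : θ ≤ 1) (ht : 0 ≤ t) :
    φ x (θ * t) ≤ ENNReal.ofReal θ * ENNReal.ofReal L * φ x t := by
  rcases eq_or_lt_of_le ht with h | h
  · rw [← h, mul_zero, hmz x hx]
    exact zero_le
  · have hθt : 0 < θ * t := mul_pos hθ0 h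
    have hle : θ * t ≤ t := by nlinarith
    have hcross := aInc_cross (haInc x hx (θ * t) t hθt hle) hθt h
    -- φ x (θt) * ofReal t ≤ ofReal L * φ x t * ofReal (θ t)
    rw [ENNReal.ofReal_mul hθ0.le] at hcross
    have ht0 : ENNReal.ofReal t ≠ 0 := (ENNReal.ofReal_pos.mpr h).ne'
    have htt : ENNReal.ofReal t ≠ ⊤ := ENNReal.ofReal_ne_top
    have h2 : φ x (θ * t) * ENNReal.ofReal t
        ≤ ENNReal.ofReal θ * ENNReal.ofReal L * φ x t * ENNReal.ofReal t := by
      calc φ x (θ * t) * ENNReal.ofReal t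
          ≤ ENNReal.ofReal L * φ x t * (ENNReal.ofReal θ * ENNReal.ofReal t) := hcross
        _ = ENNReal.ofReal θ * ENNReal.ofReal L * φ x t * ENNReal.ofReal t := by ring
    exact (ENNReal.mul_le_mul_iff_left ht0 htt).mp h2

private lemma main_one (a b : ℝ) (hab : a < b) (φ : ℝ → ℝ → ℝ≥0∞)
    (hφ : IsPhiW φ (Set.Icc a b)) (hA1 : A1 φ (Set.Icc a b)) :
    ∃ β : ℝ, 0 < β ∧ β ≤ 1 ∧ ∀ f : ℝ → ℝ,
      rieszVarUpper φ a b f ≤ 1 → rieszVar φ a b (fun x => β * f x) ≤ 1 := by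
  obtain ⟨L, hL1, haInc⟩ := hφ.aInc1
  have hL0 : 0 < L := lt_of_lt_of_le one_pos hL1
  obtain ⟨β₀, hβ₀pos, hβ₀le, hA1'⟩ := hA1 (12 * L) (by positivity)
  set C : ℝ := 6 * L + (b - a) with hC
  have hC1 : 1 ≤ C := by linarith
  have hC0 : 0 < C := by linarith
  have hLC : 1 ≤ 2 * L * C := by nlinarith
  refine ⟨β₀ / (2 * L * C), by positivity, ?_, ?_⟩
  · rw [div_le_one (by positivity)]; linarith
  intro f hf
  -- Step A: small-mesh partitions have vSum ≤ 2
  obtain ⟨δ, hδ, hδbound⟩ : ∃ δ : ℝ, 0 < δ ∧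
      ∀ P : IntervalPartition a b, P.mesh < δ → vSum φ f P ≤ 2 := by
    by_contra hcon
    push_neg at hcon
    have h2 : (2 : ℝ≥0∞) ≤ rieszVarUpper φ a b f := by
      rw [rieszVarUpper]
      refine le_iInf fun δ => le_iInf fun hδ => ?_
      obtain ⟨P, hP, hP2⟩ := hcon δ hδ
      exact le_trans hP2.le
        (le_iSup₂ (f := fun (P : IntervalPartition a b) (_ : P.mesh < δ) => vSum φ f P) P hP)
    have := le_trans h2 hf
    norm_num at this
  -- Step B
  have key : ∀ P : IntervalPartition a b,
      vSum φ (fun x => β₀ / 2 * f x) P ≤ ENNReal.ofReal C := fun P =>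
    key_bound a b hab φ (fun y hy => hφ.map_zero y hy) hL1 haInc hβ₀pos hA1' f hδ hδbound P
  -- Step C
  rw [rieszVar]
  refine iSup_le fun P => ?_
  set θ : ℝ := 1 / (L * C) with hθ
  have hθ0 : 0 < θ := by positivity
  have hθ1 : θ ≤ 1 := by rw [hθ, div_le_one (by positivity)]; nlinarith
  have hstep : vSum φ (fun x => β₀ / (2 * L * C) * f x) P
      ≤ ENNReal.ofReal θ * ENNReal.ofReal L * vSum φ (fun x => β₀ / 2 * f x) P := by
    rw [vSum, vSum, Finset.mul_sum]
    refine Finset.sum_le_sum fun k hk => ?_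
    rw [Finset.mem_range] at hk
    have hΔ : 0 < P.x (k + 1) - P.x k := P.sub_pos' hk
    have habs : ∀ c : ℝ, 0 < c →
        |c * f (P.x (k + 1)) - c * f (P.x k)| = c * |f (P.x (k + 1)) - f (P.x k)| := by
      intro c hc; rw [← mul_sub, abs_mul, abs_of_pos hc]
    rw [habs _ (by positivity), habs _ (by positivity)]
    set sk : ℝ := |f (P.x (k + 1)) - f (P.x k)| with hsk
    have hsk0 : 0 ≤ sk := abs_nonneg _
    have hsc : β₀ / (2 * L * C) = θ * (β₀ / 2) := by
      rw [hθ]; field_simp [hL0.ne', hC0.ne']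
    have hargeq : β₀ / (2 * L * C) * sk / (P.x (k + 1) - P.x k)
        = θ * (β₀ / 2 * sk / (P.x (k + 1) - P.x k)) := by
      rw [hsc]; ring
    rw [hargeq]
    rw [← mul_assoc]
    refine mul_le_mul_left ?_ _
    refine phiSup_le' fun u hu => ?_
    have huab : u ∈ Set.Icc a b := P.Icc_subset hk hu
    refine le_trans (scale_bound haInc (fun y hy => hφ.map_zero y hy) huab hθ0 hθ1
      (by positivity)) ?_
    exact mul_le_mul_right (le_phiSup' hu _) _
  refine le_trans hstep ?_
  refine le_trans (mul_le_mul_right (key P) _) ?_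
  rw [← ENNReal.ofReal_mul hθ0.le, ← ENNReal.ofReal_mul (by positivity)]
  have : θ * L * C = 1 := by rw [hθ]; field_simp
  rw [this, ENNReal.ofReal_one]

end Aux3

/-- Lemma 5.6.  Under (A1) there is `β ∈ (0,1]` such that `V̄^φ_I(f) ≤ 1` implies
`V^φ_I(βf) ≤ 1`; consequently the Luxemburg quasi-seminorms of `V̄^φ_I` and `V^φ_I` are
comparable. -/
theorem upper_variation_norm_comparable (a b : ℝ) (hab : a < b)
    (φ : ℝ → ℝ → ℝ≥0∞) (hφ : IsPhiW φ (Set.Icc a b)) (hA1 : A1 φ (Set.Icc a b)) :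
    (∃ β : ℝ, 0 < β ∧ β ≤ 1 ∧ ∀ f : ℝ → ℝ,
      rieszVarUpper φ a b f ≤ 1 → rieszVar φ a b (fun x => β * f x) ≤ 1) ∧
    (∃ c : ℝ, 1 ≤ c ∧ ∀ f : ℝ → ℝ,
      rbvNormUpper φ a b f ≤ rbvNorm φ a b f ∧
      rbvNorm φ a b f ≤ c * rbvNormUpper φ a b f) := by
  obtain ⟨β, hβ0, hβ1, hmain⟩ := main_one a b hab φ hφ hA1
  refine ⟨⟨β, hβ0, hβ1, hmain⟩, 1 / β, ?_, ?_⟩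
  · rw [le_div_iff₀ hβ0, one_mul]; exact hβ1
  intro f
  set S := {lam : ℝ | 0 < lam ∧ rieszVar φ a b (fun x => f x / lam) ≤ 1} with hSdef
  set T := {lam : ℝ | 0 < lam ∧ rieszVarUpper φ a b (fun x => f x / lam) ≤ 1} with hTdef
  have hST : S ⊆ T := fun lam hlam =>
    ⟨hlam.1, le_trans (rieszVarUpper_le_rieszVar φ a b _) hlam.2⟩
  have hTS : ∀ lam ∈ T, lam / β ∈ S := by
    intro lam hlam
    refine ⟨div_pos hlam.1 hβ0, ?_⟩
    have h1 := hmain (fun x => f x / lam) hlam.2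
    have heq : (fun x => β * (f x / lam)) = fun x => f x / (lam / β) := by
      funext x
      rw [div_div_eq_mul_div]
      ring
    rw [heq] at h1
    exact h1
  have hbd : BddBelow S := ⟨0, fun lam hlam => hlam.1.le⟩
  have hbdT : BddBelow T := ⟨0, fun lam hlam => hlam.1.le⟩
  constructor
  · show sInf T ≤ sInf S
    rcases Set.eq_empty_or_nonempty S with h | h
    · have hT : T = ∅ := by
        rcases Set.eq_empty_or_nonempty T with h' | h'
        · exact h'
        · obtain ⟨lam, hlam⟩ := h'
          have := hTS lam hlam
          rw [h] at this
          exact absurd this (Set.notMem_empty _)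
      rw [h, hT]
    · exact csInf_le_csInf hbdT h hST
  · show sInf S ≤ 1 / β * sInf T
    rcases Set.eq_empty_or_nonempty T with h | h
    · have hSe : S = ∅ := Set.eq_empty_of_subset_empty (h ▸ hST)
      rw [h, hSe, Real.sInf_empty]
      norm_num
    · have h1 : sInf S * β ≤ sInf T := by
        refine le_csInf h fun lam hlam => ?_
        have h2 : sInf S ≤ lam / β := csInf_le hbd (hTS lam hlam)
        calc sInf S * β ≤ lam / β * β := mul_le_mul_of_nonneg_right h2 hβ0.le
          _ = lam := by field_simp
      have h3 : 1 / β * sInf T = sInf T / β := by ring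
      rw [h3, le_div_iff₀ hβ0]
      exact h1
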